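/- arXiv:2305.04736 — 4 statements merged into one kernel-verified Lean document; each statement's English description precedes it below -/
import Mathlib

section
/- Let f : ℝ^d → ℝ be differentiable and let y, z ∈ ℝ^d. For τ ∈ ℝ define x_τ = τ·y + (1-τ)·z. Then for any c ≥ 0 there exists τ ∈ [0,1] such that τ·⟨∇f(x_τ), y - z⟩ ≤ c·(f(y) - f(x_τ)). -/
open scoped RealInnerProductSpace Topology
open Filter

/-- Existence of a momentum parameter τ ∈ [0,1] with
τ⟨∇f(x_τ), y - z⟩ ≤ c (f(y) - f(x_τ)), where x_τ = τ y + (1-τ) z. -/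
theorem exists_momentum_parameter {d : ℕ}
    (f : EuclideanSpace ℝ (Fin d) → ℝ)
    (hdiff : Differentiable ℝ f)
    (y z : EuclideanSpace ℝ (Fin d)) (c : ℝ) (hc : 0 ≤ c) :
    ∃ τ : ℝ, τ ∈ Set.Icc (0 : ℝ) 1 ∧
      τ * ⟪gradient f (τ • y + (1 - τ) • z), y - z⟫ ≤
        c * (f y - f (τ • y + (1 - τ) • z)) := by
  set p : ℝ → EuclideanSpace ℝ (Fin d) := fun t => t • y + (1 - t) • z with hp
  set g : ℝ → ℝ := fun t => f (p t) with hgdef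
  have hpath : ∀ t : ℝ, HasDerivAt p (y - z) t := by
    intro t
    have h1 : HasDerivAt (fun s : ℝ => s • y) ((1:ℝ) • y) t :=
      (hasDerivAt_id t).smul_const y
    have h2 : HasDerivAt (fun s : ℝ => (1 - s) • z) ((-1 : ℝ) • z) t := by
      have h : HasDerivAt (fun s : ℝ => 1 - s) (-1) t := by
        exact ((hasDerivAt_const t (1:ℝ)).sub (hasDerivAt_id' t)).congr_deriv (by norm_num)
      exact h.smul_const z
    have := h1.add h2
    exact this.congr_deriv (by simp [sub_eq_add_neg])
  have hginner : ∀ t : ℝ, ⟪gradient f (p t), y - z⟫ = fderiv ℝ f (p t) (y - z) := by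
    intro t
    rw [gradient]
    exact InnerProductSpace.toDual_symm_apply
  have hg' : ∀ t : ℝ, HasDerivAt g (fderiv ℝ f (p t) (y - z)) t := by
    intro t
    exact ((hdiff (p t)).hasFDerivAt).comp_hasDerivAt t (hpath t)
  have hgc : Continuous g := hdiff.continuous.comp (by fun_prop)
  obtain ⟨τ, hτ, hmin⟩ := isCompact_Icc.exists_isMinOn (Set.nonempty_Icc.2 zero_le_one)
    hgc.continuousOn (f := g)
  refine ⟨τ, hτ, ?_⟩
  have hg1 : g 1 = f y := by simp [hgdef, hp]
  have hRHS : 0 ≤ c * (f y - g τ) := by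
    have : g τ ≤ g 1 := hmin (Set.right_mem_Icc.2 zero_le_one)
    have := sub_nonneg.2 (hg1 ▸ this)
    exact mul_nonneg hc this
  rw [hginner]
  rcases eq_or_lt_of_le hτ.2 with h1 | h1
  · -- τ = 1 : derivative nonpositive
    subst h1
    have hle : fderiv ℝ f (p 1) (y - z) ≤ 0 := by
      have hslope : Tendsto (slope g 1) (𝓝[<] (1:ℝ)) (𝓝 (fderiv ℝ f (p 1) (y - z))) :=
        (hasDerivAt_iff_tendsto_slope.1 (hg' 1)).mono_left
          (nhdsWithin_mono _ (fun x hx => ne_of_lt hx))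
      refine le_of_tendsto hslope ?_
      filter_upwards [Ioo_mem_nhdsLT_of_mem (by norm_num : (1:ℝ) ∈ Set.Ioc 0 1)] with t ht
      have hgt : g 1 ≤ g t := hmin ⟨le_of_lt ht.1, le_of_lt ht.2⟩
      rw [slope_def_field]
      exact div_nonpos_of_nonneg_of_nonpos (sub_nonneg.2 hgt) (by linarith [ht.2])
    show 1 * fderiv ℝ f (p 1) (y - z) ≤ c * (f y - f (p 1))
    calc 1 * fderiv ℝ f (p 1) (y - z) = fderiv ℝ f (p 1) (y - z) := one_mul _
      _ ≤ 0 := hle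
      _ ≤ c * (f y - f (p 1)) := hRHS
  · rcases eq_or_lt_of_le hτ.1 with h0 | h0
    · subst h0
      show 0 * fderiv ℝ f (p 0) (y - z) ≤ c * (f y - f (p 0))
      simpa using hRHS
    · -- interior: derivative zero
      have hloc : IsLocalMin g τ := hmin.isLocalMin (Icc_mem_nhds h0 h1)
      have := hloc.hasDerivAt_eq_zero (hg' τ)
      show τ * fderiv ℝ f (p τ) (y - z) ≤ c * (f y - f (p τ))
      rw [this, mul_zero]
      exact hRHS
end

section
/- Let f : ℝ^d → ℝ be differentiable, let y, z ∈ ℝ^d and for τ ∈ ℝ define x_τ = τ·y + (1-τ)·z. For any b, c, ε ≥ 0 there exists τ ∈ [0,1] such that τ·⟨∇f(x_τ), y - z⟩ - τ²·b·‖y - z‖² ≤ c·(f(y) - f(x_τ)) + ε. -/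
open scoped RealInnerProductSpace

/-- Slackened momentum-parameter existence: for any b, c, ε ≥ 0 there is τ ∈ [0,1]
with τ⟨∇f(x_τ), y - z⟩ - τ² b ‖y - z‖² ≤ c (f(y) - f(x_τ)) + ε. -/
theorem exists_momentum_parameter_slack {d : ℕ}
    (f : EuclideanSpace ℝ (Fin d) → ℝ)
    (hdiff : Differentiable ℝ f)
    (y z : EuclideanSpace ℝ (Fin d)) (b c ε : ℝ)
    (hb : 0 ≤ b) (hc : 0 ≤ c) (hε : 0 ≤ ε) :
    ∃ τ : ℝ, τ ∈ Set.Icc (0 : ℝ) 1 ∧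
      τ * ⟪gradient f (τ • y + (1 - τ) • z), y - z⟫ - τ ^ 2 * b * ‖y - z‖ ^ 2 ≤
        c * (f y - f (τ • y + (1 - τ) • z)) + ε := by
  by_contra hcon
  push_neg at hcon
  set L : ℝ → EuclideanSpace ℝ (Fin d) := fun τ => τ • y + (1 - τ) • z with hL
  set g : ℝ → ℝ := fun τ => f (L τ) with hg
  set G : ℝ → ℝ := fun τ => ⟪gradient f (L τ), y - z⟫ with hG
  -- derivative of g
  have hLd : ∀ τ : ℝ, HasDerivAt L (y - z) τ := by
    intro τ
    have h1 : HasDerivAt (fun τ : ℝ => τ • y) ((1:ℝ) • y) τ :=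
      (hasDerivAt_id τ).smul_const y
    have h2 : HasDerivAt (fun τ : ℝ => (1 - τ) • z) ((-1:ℝ) • z) τ := by
      have : HasDerivAt (fun τ : ℝ => 1 - τ) (-1) τ := by
        simpa [Pi.sub_def] using (hasDerivAt_const τ (1:ℝ)).sub (hasDerivAt_id τ)
      exact this.smul_const z
    have := h1.add h2
    simpa [sub_eq_add_neg, Pi.add_def, hL] using this
  have hgd : ∀ τ : ℝ, HasDerivAt g (G τ) τ := by
    intro τ
    have hgrad := (hdiff (L τ)).hasGradientAt
    have hf := hgrad.hasFDerivAt
    have := hf.comp_hasDerivAt τ (hLd τ)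
    have heq : (InnerProductSpace.toDual ℝ (EuclideanSpace ℝ (Fin d))
        (gradient f (L τ))) (y - z) = G τ := by
      simp [hG, InnerProductSpace.toDual_apply_apply]
    rw [heq] at this
    exact this
  -- negation rewritten: for τ ∈ [0,1], c*(f y - g τ) + τ*(-G τ) < -(ε + τ^2*b*‖y-z‖^2)
  have key : ∀ τ ∈ Set.Icc (0:ℝ) 1,
      c * (f y - g τ) + τ * (-(G τ)) < -(ε + τ ^ 2 * b * ‖y - z‖ ^ 2) := by
    intro τ hτ
    have := hcon τ hτ
    simp only [hg, hG, hL] at *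
    linarith
  rcases eq_or_lt_of_le hc with hc0 | hcpos
  · -- c = 0 : evaluate at τ = 0
    have := key 0 ⟨le_refl 0, zero_le_one⟩
    have hB : 0 ≤ ε + 0 ^ 2 * b * ‖y - z‖ ^ 2 := by positivity
    rw [← hc0] at this
    simp at this
    linarith
  · -- c > 0 : φ τ = τ ^ c * (f y - g τ) is strictly decreasing, φ 0 = φ 1 = 0
    set φ : ℝ → ℝ := fun τ => τ ^ c * (f y - g τ) with hφ
    have hgc : Continuous g :=
      continuous_iff_continuousAt.2 fun τ => (hgd τ).continuousAt
    have hφc : ContinuousOn φ (Set.Icc 0 1) := by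
      apply ContinuousOn.mul
      · intro x _
        exact (Real.continuousAt_rpow_const x c (Or.inr hcpos.le)).continuousWithinAt
      · exact ((continuous_const.sub hgc)).continuousOn
    have hderiv : ∀ τ ∈ Set.Ioo (0:ℝ) 1, HasDerivAt φ
        (c * τ ^ (c - 1) * (f y - g τ) + τ ^ c * (-(G τ))) τ := by
      intro τ hτ
      have h1 : HasDerivAt (fun t : ℝ => t ^ c) (c * τ ^ (c - 1)) τ := by
        simpa [mul_comm] using Real.hasDerivAt_rpow_const (x := τ) (p := c) (Or.inl (ne_of_gt hτ.1))
      have h2 : HasDerivAt (fun t : ℝ => f y - g t) (-(G τ)) τ := by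
        simpa [Pi.sub_def] using (hasDerivAt_const τ (f y)).sub (hgd τ)
      simpa [Pi.mul_def, hφ] using h1.mul h2
    have hneg : ∀ τ ∈ Set.Ioo (0:ℝ) 1, deriv φ τ < 0 := by
      intro τ hτ
      rw [(hderiv τ hτ).deriv]
      have hτ0 : 0 < τ := hτ.1
      have hfac : τ ^ c = τ ^ (c - 1) * τ := by
        rw [← Real.rpow_add_one (ne_of_gt hτ0)]; ring_nf
      rw [hfac]
      have hk := key τ ⟨le_of_lt hτ.1, le_of_lt hτ.2⟩
      have hB : 0 ≤ ε + τ ^ 2 * b * ‖y - z‖ ^ 2 := by positivity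
      have hsum : c * (f y - g τ) + τ * (-(G τ)) < 0 := lt_of_lt_of_le hk (by linarith)
      have hpow : 0 < τ ^ (c - 1) := Real.rpow_pos_of_pos hτ0 _
      calc c * τ ^ (c - 1) * (f y - g τ) + τ ^ (c - 1) * τ * (-(G τ))
          = τ ^ (c - 1) * (c * (f y - g τ) + τ * (-(G τ))) := by ring
        _ < τ ^ (c - 1) * 0 := by exact mul_lt_mul_of_pos_left hsum hpow
        _ = 0 := by ring
    have hmono : StrictAntiOn φ (Set.Icc 0 1) := by
      apply strictAntiOn_of_deriv_neg (convex_Icc 0 1) hφc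
      intro τ hτ
      rw [interior_Icc] at hτ
      exact hneg τ hτ
    have h01 : φ 1 < φ 0 := hmono ⟨le_refl 0, zero_le_one⟩ ⟨zero_le_one, le_refl 1⟩ zero_lt_one
    have hφ0 : φ 0 = 0 := by
      simp [hφ, Real.zero_rpow (ne_of_gt hcpos)]
    have hφ1 : φ 1 = 0 := by
      simp [hφ, hg, hL]
    rw [hφ0, hφ1] at h01
    exact lt_irrefl 0 h01
end

section
/- Let f = (1/n)∑_{i=1}^n f_i where each f_i : ℝ^d → ℝ is L-smooth, and suppose the interpolation assumption holds: there exists x* minimizing f such that x* also minimizes each f_i. Let i be sampled uniformly from {1,...,n}, x_{k+1}, y_k ∈ ℝ^d, and set ∇_k := ∇f_i(x_{k+1}) - ∇f_i(y_k) + ∇f(y_k). Then E_i[‖∇_k - ∇f(x_{k+1})‖²] ≤ 4L(f(x_{k+1}) - f(x*) + f(y_k) - f(x*)). -/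
open scoped RealInnerProductSpace

section Aux

variable {F : Type*} [NormedAddCommGroup F] [InnerProductSpace ℝ F] [CompleteSpace F]

/-- Derivative of `t ↦ f (x + t • v)` is `⟪∇f(x + t•v), v⟫`. -/
lemma aux_hasDerivAt_line (f : F → ℝ) (hd : Differentiable ℝ f) (x v : F) (t : ℝ) :
    HasDerivAt (fun s : ℝ => f (x + s • v)) ⟪gradient f (x + t • v), v⟫ t := by
  have hline : HasDerivAt (fun s : ℝ => x + s • v) v t := by
    simpa using ((hasDerivAt_id t).smul_const v).const_add x
  have hfd := ((hd (x + t • v)).hasGradientAt.hasFDerivAt).comp_hasDerivAt t hline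
  simpa [InnerProductSpace.toDual_apply_apply, Function.comp_def] using hfd

/-- Descent lemma: L-Lipschitz gradient gives the quadratic upper bound. -/
lemma aux_descent (f : F → ℝ) (hd : Differentiable ℝ f) (L : ℝ) (hL : 0 < L)
    (hlip : ∀ x y, ‖gradient f x - gradient f y‖ ≤ L * ‖x - y‖) (x y : F) :
    f y ≤ f x + ⟪gradient f x, y - x⟫ + L / 2 * ‖y - x‖ ^ 2 := by
  set v := y - x with hv
  set φ : ℝ → ℝ := fun t =>
    f x + t * ⟪gradient f x, v⟫ + L / 2 * t ^ 2 * ‖v‖ ^ 2 - f (x + t • v) with hφ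
  have hder : ∀ t : ℝ, HasDerivAt φ
      (⟪gradient f x, v⟫ + L * t * ‖v‖ ^ 2 - ⟪gradient f (x + t • v), v⟫) t := by
    intro t
    have h1 : HasDerivAt (fun t : ℝ =>
        f x + t * ⟪gradient f x, v⟫ + L / 2 * t ^ 2 * ‖v‖ ^ 2)
        (⟪gradient f x, v⟫ + L * t * ‖v‖ ^ 2) t := by
      have ha : HasDerivAt (fun t : ℝ => t * ⟪gradient f x, v⟫) ⟪gradient f x, v⟫ t := by
        simpa using (hasDerivAt_id t).mul_const ⟪gradient f x, v⟫
      have hb : HasDerivAt (fun t : ℝ => L / 2 * t ^ 2 * ‖v‖ ^ 2)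
          (L * t * ‖v‖ ^ 2) t := by
        have := ((hasDerivAt_pow 2 t).const_mul (L / 2)).mul_const (‖v‖ ^ 2)
        convert this using 1
        · rfl
        · rfl
        ring
      exact ((ha.const_add (f x)).add hb)
    exact h1.sub (aux_hasDerivAt_line f hd x v t)
  have hmono : MonotoneOn φ (Set.Icc (0:ℝ) 1) := by
    apply monotoneOn_of_deriv_nonneg (convex_Icc 0 1)
    · exact fun t _ => ((hder t).continuousAt).continuousWithinAt
    · exact fun t _ => ((hder t).differentiableAt).differentiableWithinAt
    · intro t ht
      rw [interior_Icc] at ht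
      rw [(hder t).deriv]
      have hineq : ⟪gradient f (x + t • v) - gradient f x, v⟫ ≤ L * t * ‖v‖ ^ 2 := by
        calc ⟪gradient f (x + t • v) - gradient f x, v⟫
            ≤ ‖gradient f (x + t • v) - gradient f x‖ * ‖v‖ :=
              real_inner_le_norm _ _
          _ ≤ (L * ‖(x + t • v) - x‖) * ‖v‖ := by
              have := hlip (x + t • v) x
              exact mul_le_mul_of_nonneg_right this (norm_nonneg _)
          _ = L * t * ‖v‖ ^ 2 := by
              rw [add_sub_cancel_left, norm_smul]
              simp [abs_of_nonneg ht.1.le]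
              ring
      rw [inner_sub_left] at hineq
      linarith
  have h01 := hmono (Set.left_mem_Icc.2 zero_le_one) (Set.right_mem_Icc.2 zero_le_one)
    zero_le_one
  have hφ0 : φ 0 = 0 := by simp [hφ]
  have hφ1 : φ 1 = f x + ⟪gradient f x, v⟫ + L / 2 * ‖v‖ ^ 2 - f y := by
    simp [hφ, hv]
  rw [hφ0, hφ1] at h01
  linarith

/-- If x* is a global minimizer of an L-smooth differentiable f, then
`‖∇f(x)‖² ≤ 2L(f x - f x*)`. -/
lemma aux_grad_sq_le (f : F → ℝ) (hd : Differentiable ℝ f) (L : ℝ) (hL : 0 < L)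
    (hlip : ∀ x y, ‖gradient f x - gradient f y‖ ≤ L * ‖x - y‖)
    (xstar : F) (hmin : ∀ x, f xstar ≤ f x) (x : F) :
    ‖gradient f x‖ ^ 2 ≤ 2 * L * (f x - f xstar) := by
  set g := gradient f x with hg
  have hdesc := aux_descent f hd L hL hlip x (x - L⁻¹ • g)
  have hy : (x - L⁻¹ • g) - x = -(L⁻¹ • g) := by abel
  rw [hy] at hdesc
  have h1 : ⟪g, -(L⁻¹ • g)⟫ = -(L⁻¹ * ‖g‖ ^ 2) := by
    rw [inner_neg_right, real_inner_smul_right, real_inner_self_eq_norm_sq]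
  have h2 : ‖-(L⁻¹ • g)‖ ^ 2 = L⁻¹ ^ 2 * ‖g‖ ^ 2 := by
    rw [norm_neg, norm_smul, norm_inv, Real.norm_eq_abs, abs_of_pos hL]
    ring
  rw [h1, h2] at hdesc
  have hmin' := hmin (x - L⁻¹ • g)
  have hLne : L ≠ 0 := ne_of_gt hL
  have : f xstar ≤ f x - L⁻¹ * ‖g‖ ^ 2 + L / 2 * (L⁻¹ ^ 2 * ‖g‖ ^ 2) :=
    le_trans hmin' hdesc
  have hsimp : L / 2 * (L⁻¹ ^ 2 * ‖g‖ ^ 2) = L⁻¹ * ‖g‖ ^ 2 / 2 := by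
    field_simp
  rw [hsimp] at this
  have h3 : L⁻¹ * ‖g‖ ^ 2 / 2 ≤ f x - f xstar := by linarith
  calc ‖g‖ ^ 2 = 2 * L * (L⁻¹ * ‖g‖ ^ 2 / 2) := by field_simp
    _ ≤ 2 * L * (f x - f xstar) := by
        apply mul_le_mul_of_nonneg_left h3
        positivity

end Aux

/-- SVRG-type variance bound under interpolation (single-index estimator):
E_i ‖(∇f_i(x_{k+1}) - ∇f_i(y_k) + ∇f(y_k)) - ∇f(x_{k+1})‖²
  ≤ 4L (f(x_{k+1}) - f(x*) + f(y_k) - f(x*)). -/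
theorem svrg_variance_bound_single {d n : ℕ} (hn : 0 < n)
    (fi : Fin n → EuclideanSpace ℝ (Fin d) → ℝ)
    (f : EuclideanSpace ℝ (Fin d) → ℝ)
    (hf : f = fun x => (1 / (n : ℝ)) * ∑ i, fi i x)
    (hdiff : ∀ i, Differentiable ℝ (fi i))
    (L : ℝ) (hL : 0 < L)
    (hsmooth : ∀ i, ∀ x y, ‖gradient (fi i) x - gradient (fi i) y‖ ≤ L * ‖x - y‖)
    (xstar : EuclideanSpace ℝ (Fin d))
    (hminf : ∀ x, f xstar ≤ f x)
    (hinterp : ∀ i, ∀ x, fi i xstar ≤ fi i x)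
    (xk1 yk : EuclideanSpace ℝ (Fin d)) :
    (1 / (n : ℝ)) * ∑ i,
        ‖(gradient (fi i) xk1 - gradient (fi i) yk + gradient f yk)
          - gradient f xk1‖ ^ 2
      ≤ 4 * L * (f xk1 - f xstar + (f yk - f xstar)) := by
  have hnR : (0:ℝ) < n := Nat.cast_pos.2 hn
  -- gradient of the average
  have hgrad : ∀ x, gradient f x = (1 / (n:ℝ)) • ∑ i, gradient (fi i) x := by
    intro x
    have hsum : HasFDerivAt (fun y => ∑ i, fi i y)
        (∑ i, InnerProductSpace.toDual ℝ _ (gradient (fi i) x)) x :=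
      HasFDerivAt.fun_sum (fun i _ => ((hdiff i) x).hasGradientAt.hasFDerivAt)
    have hmul := hsum.const_mul (1 / (n:ℝ))
    have heq : (1 / (n:ℝ)) • ∑ i, InnerProductSpace.toDual ℝ _ (gradient (fi i) x)
        = InnerProductSpace.toDual ℝ _ ((1 / (n:ℝ)) • ∑ i, gradient (fi i) x) := by
      rw [map_smul, map_sum]
    rw [heq] at hmul
    have h := hmul.hasGradientAt
    rw [LinearIsometryEquiv.symm_apply_apply] at h
    have : HasGradientAt f ((1 / (n:ℝ)) • ∑ i, gradient (fi i) x) x := by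
      rw [hf]; exact h
    exact this.gradient
  set a : Fin n → EuclideanSpace ℝ (Fin d) :=
    fun i => gradient (fi i) xk1 - gradient (fi i) yk with ha
  set abar : EuclideanSpace ℝ (Fin d) := gradient f xk1 - gradient f yk with habar
  have hterm : ∀ i, (gradient (fi i) xk1 - gradient (fi i) yk + gradient f yk)
      - gradient f xk1 = a i - abar := by
    intro i; rw [ha, habar]; beta_reduce; abel
  have hsum_a : ∑ i, a i = (n:ℝ) • abar := by
    rw [habar, hgrad, hgrad, ha, ← smul_sub, ← Finset.sum_sub_distrib, smul_smul]
    rw [one_div, mul_inv_cancel₀ (ne_of_gt hnR), one_smul]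
  -- variance reduction step: ∑ ‖a i - abar‖² ≤ ∑ ‖a i‖²
  have hvar : ∑ i, ‖a i - abar‖ ^ 2 ≤ ∑ i, ‖a i‖ ^ 2 := by
    have hexp : ∑ i, ‖a i - abar‖ ^ 2
        = ∑ i, ‖a i‖ ^ 2 - 2 * ⟪∑ i, a i, abar⟫ + (n:ℝ) * ‖abar‖ ^ 2 := by
      rw [Finset.sum_congr rfl (fun i _ => norm_sub_sq_real (a i) abar)]
      rw [Finset.sum_add_distrib, Finset.sum_sub_distrib, ← Finset.mul_sum,
        sum_inner, Finset.sum_const, Finset.card_univ, Fintype.card_fin]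
      push_cast
      ring
    rw [hexp, hsum_a, real_inner_smul_left, real_inner_self_eq_norm_sq]
    nlinarith [sq_nonneg ‖abar‖, hnR]
  -- per-term bound
  have hbound : ∀ i, ‖a i‖ ^ 2
      ≤ 4 * L * (fi i xk1 - fi i xstar) + 4 * L * (fi i yk - fi i xstar) := by
    intro i
    have h1 := aux_grad_sq_le (fi i) (hdiff i) L hL (hsmooth i) xstar (hinterp i) xk1
    have h2 := aux_grad_sq_le (fi i) (hdiff i) L hL (hsmooth i) xstar (hinterp i) yk
    have htri : ‖a i‖ ≤ ‖gradient (fi i) xk1‖ + ‖gradient (fi i) yk‖ := norm_sub_le _ _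
    nlinarith [norm_nonneg (a i), norm_nonneg (gradient (fi i) xk1),
      norm_nonneg (gradient (fi i) yk), sq_nonneg (‖gradient (fi i) xk1‖ - ‖gradient (fi i) yk‖)]
  -- put together
  have hsum_bound : ∑ i, ‖a i - abar‖ ^ 2
      ≤ ∑ i, (4 * L * (fi i xk1 - fi i xstar) + 4 * L * (fi i yk - fi i xstar)) :=
    le_trans hvar (Finset.sum_le_sum fun i _ => hbound i)
  have hfx : ∀ x, f x = (1 / (n:ℝ)) * ∑ i, fi i x := fun x => by rw [hf]
  calc (1 / (n : ℝ)) * ∑ i,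
        ‖(gradient (fi i) xk1 - gradient (fi i) yk + gradient f yk)
          - gradient f xk1‖ ^ 2
      = (1 / (n:ℝ)) * ∑ i, ‖a i - abar‖ ^ 2 := by
        congr 1; exact Finset.sum_congr rfl fun i _ => by rw [hterm i]
    _ ≤ (1 / (n:ℝ)) * ∑ i, (4 * L * (fi i xk1 - fi i xstar)
          + 4 * L * (fi i yk - fi i xstar)) := by
        apply mul_le_mul_of_nonneg_left hsum_bound
        positivity
    _ = 4 * L * (f xk1 - f xstar + (f yk - f xstar)) := by
        rw [hfx xk1, hfx yk, hfx xstar]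
        rw [Finset.sum_add_distrib, ← Finset.mul_sum, ← Finset.mul_sum,
          Finset.sum_sub_distrib, Finset.sum_sub_distrib]
        field_simp
end

section
/- Let f = (1/n)∑_{i=1}^n f_i with each f_i L-smooth, satisfying the interpolation assumption with common minimizer x*. Let I_k be a uniformly random subset of {1,...,n} of size b_k, define f_{I_k} = (1/b_k)∑_{i∈I_k} f_i, and set ∇_k := ∇f_{I_k}(x_{k+1}) - ∇f_{I_k}(x̃) + ∇f(x̃). Then E_{I_k}[‖∇_k - ∇f(x_{k+1})‖²] ≤ 4L·((n-b_k)/(b_k(n-1)))·(f(x_{k+1}) - f(x*) + f(x̃) - f(x*)). -/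
open Finset
open scoped RealInnerProductSpace

section Aux

lemma svrg_card_powersetCard_filter_supset {α : Type*} [DecidableEq α] (t s : Finset α)
    (h : s ⊆ t) (b : ℕ) (hsb : s.card ≤ b) :
    ((t.powersetCard b).filter (fun I => s ⊆ I)).card = (t.card - s.card).choose (b - s.card) := by
  rw [← Finset.card_sdiff_of_subset h, ← Finset.card_powersetCard (b - s.card) (t \ s)]
  apply Finset.card_bij' (fun I _ => I \ s) (fun J _ => J ∪ s)
  · intro I hI
    rw [Finset.mem_filter, Finset.mem_powersetCard] at hI
    obtain ⟨⟨hIt, hIc⟩, hsI⟩ := hI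
    rw [Finset.mem_powersetCard]
    exact ⟨Finset.sdiff_subset_sdiff hIt le_rfl, by rw [Finset.card_sdiff_of_subset hsI, hIc]⟩
  · intro J hJ
    rw [Finset.mem_powersetCard] at hJ
    obtain ⟨hJt, hJc⟩ := hJ
    have hdisj : Disjoint J s := Finset.disjoint_of_subset_left hJt (Finset.sdiff_disjoint)
    rw [Finset.mem_filter, Finset.mem_powersetCard]
    refine ⟨⟨Finset.union_subset (hJt.trans (Finset.sdiff_subset)) h, ?_⟩, Finset.subset_union_right⟩
    rw [Finset.card_union_of_disjoint hdisj, hJc]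
    omega
  · intro I hI
    rw [Finset.mem_filter] at hI
    exact Finset.sdiff_union_of_subset hI.2
  · intro J hJ
    rw [Finset.mem_powersetCard] at hJ
    have hdisj : Disjoint J s := Finset.disjoint_of_subset_left hJ.1 (Finset.sdiff_disjoint)
    rw [Finset.union_sdiff_right, Finset.sdiff_eq_self_of_disjoint hdisj]


lemma svrg_choose_pascal_aux (m c : ℕ) :
    (m + 1).choose c = m.choose c + (if 1 ≤ c then m.choose (c - 1) else 0) := by
  rcases c with _ | e
  · simp
  · simp [Nat.choose_succ_succ, Nat.add_comm]


variable {F : Type*} [NormedAddCommGroup F] [InnerProductSpace ℝ F]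

lemma svrg_sum_powersetCard_norm_sq (n b : ℕ) (hn : 2 ≤ n) (hb : 1 ≤ b) (hbn : b ≤ n)
    (h : Fin n → F) (hsum : ∑ i, h i = 0) :
    ∑ I ∈ (Finset.univ : Finset (Fin n)).powersetCard b, (‖∑ i ∈ I, h i‖ : ℝ) ^ 2
      = ((n - 2).choose (b - 1) : ℝ) * ∑ i, ‖h i‖ ^ 2 := by
  classical
  -- counts
  have hcount1 : ∀ i : Fin n,
      (((Finset.univ : Finset (Fin n)).powersetCard b).filter (fun I => i ∈ I)).card
        = (n - 1).choose (b - 1) := by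
    intro i
    have := svrg_card_powersetCard_filter_supset (Finset.univ : Finset (Fin n)) {i}
      (Finset.subset_univ _) b (by simpa using hb)
    simp only [Finset.singleton_subset_iff, Finset.card_singleton, Finset.card_univ,
      Fintype.card_fin] at this
    convert this using 2
  have hcount2 : ∀ i j : Fin n, i ≠ j →
      (((Finset.univ : Finset (Fin n)).powersetCard b).filter (fun I => i ∈ I ∧ j ∈ I)).card
        = (if 2 ≤ b then (n - 2).choose (b - 2) else 0) := by
    intro i j hij
    by_cases h2 : 2 ≤ b
    · have := svrg_card_powersetCard_filter_supset (Finset.univ : Finset (Fin n)) {i, j}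
        (Finset.subset_univ _) b (by rw [Finset.card_insert_of_notMem (by simpa using hij)]; simpa using h2)
      rw [Finset.card_insert_of_notMem (by simpa using hij), Finset.card_singleton,
        Finset.card_univ, Fintype.card_fin] at this
      rw [if_pos h2, ← this]
      congr 1
      apply Finset.filter_congr
      intro I _
      simp [Finset.insert_subset_iff]
    · have hb1 : b = 1 := by omega
      rw [if_neg h2]
      rw [Finset.card_eq_zero, Finset.filter_eq_empty_iff]
      intro I hI
      rw [Finset.mem_powersetCard] at hI
      rintro ⟨hiI, hjI⟩
      have : 2 ≤ I.card := Finset.one_lt_card.mpr ⟨i, hiI, j, hjI, hij⟩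
      omega
  -- expand norms into inner products
  have expand : ∀ I : Finset (Fin n), (‖∑ i ∈ I, h i‖ : ℝ) ^ 2
      = ∑ i ∈ I, ∑ j ∈ I, (inner ℝ (h i) (h j) : ℝ) := by
    intro I
    rw [← real_inner_self_eq_norm_sq, sum_inner]
    exact Finset.sum_congr rfl fun i _ => inner_sum _ _ _
  simp_rw [expand]
  -- rewrite inner double sums over univ with indicators
  have step : ∀ I : Finset (Fin n), ∑ i ∈ I, ∑ j ∈ I, (inner ℝ (h i) (h j) : ℝ)
      = ∑ i : Fin n, ∑ j : Fin n, (if i ∈ I ∧ j ∈ I then (inner ℝ (h i) (h j) : ℝ) else 0) := by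
    intro I
    have e1 : ∀ (X : Fin n → ℝ), ∑ i ∈ I, X i = ∑ i : Fin n, if i ∈ I then X i else 0 := by
      intro X; rw [Finset.sum_ite_mem, Finset.univ_inter]
    rw [e1]
    refine Finset.sum_congr rfl fun i _ => ?_
    by_cases hi : i ∈ I
    · rw [if_pos hi, e1]
      exact Finset.sum_congr rfl fun j _ => by by_cases hj : j ∈ I <;> simp [hi, hj]
    · rw [if_neg hi]
      exact (Finset.sum_eq_zero fun j _ => by simp [hi]).symm
  simp_rw [step]
  rw [Finset.sum_comm]
  have swap2 : ∀ i : Fin n, ∑ I ∈ (Finset.univ : Finset (Fin n)).powersetCard b,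
        ∑ j : Fin n, (if i ∈ I ∧ j ∈ I then (inner ℝ (h i) (h j) : ℝ) else 0)
      = ∑ j : Fin n,
          ((((Finset.univ : Finset (Fin n)).powersetCard b).filter
            (fun I => i ∈ I ∧ j ∈ I)).card : ℝ) * (inner ℝ (h i) (h j) : ℝ) := by
    intro i
    rw [Finset.sum_comm]
    refine Finset.sum_congr rfl fun j _ => ?_
    rw [Finset.sum_ite, Finset.sum_const_zero, add_zero, Finset.sum_const, nsmul_eq_mul]
  simp_rw [swap2]
  -- replace counts
  set A : ℝ := ((n - 1).choose (b - 1) : ℝ) with hA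
  set q : ℝ := (if 2 ≤ b then ((n - 2).choose (b - 2) : ℝ) else 0) with hq
  have hcnt : ∀ i j : Fin n,
      ((((Finset.univ : Finset (Fin n)).powersetCard b).filter
          (fun I => i ∈ I ∧ j ∈ I)).card : ℝ) * (inner ℝ (h i) (h j) : ℝ)
        = q * (inner ℝ (h i) (h j) : ℝ)
          + (if i = j then (A - q) * (inner ℝ (h i) (h j) : ℝ) else 0) := by
    intro i j
    by_cases hij : i = j
    · subst hij
      rw [if_pos rfl]
      have e : ((Finset.univ : Finset (Fin n)).powersetCard b).filter (fun I => i ∈ I ∧ i ∈ I)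
          = ((Finset.univ : Finset (Fin n)).powersetCard b).filter (fun I => i ∈ I) := by
        apply Finset.filter_congr; intro I _; simp
      rw [e, hcount1 i]
      ring
    · rw [if_neg hij, add_zero, hcount2 i j hij]
      push_cast [hq]
      by_cases h2 : 2 ≤ b <;> simp [h2]
  simp_rw [hcnt]
  rw [Finset.sum_congr rfl (fun i _ => Finset.sum_add_distrib), Finset.sum_add_distrib]
  have hzero : ∑ i : Fin n, ∑ j : Fin n, q * (inner ℝ (h i) (h j) : ℝ) = 0 := by
    have : ∑ i : Fin n, ∑ j : Fin n, (inner ℝ (h i) (h j) : ℝ) = 0 := by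
      simp_rw [← inner_sum]
      rw [← sum_inner, hsum, inner_zero_left]
    simp_rw [← Finset.mul_sum]
    rw [this, mul_zero]
  rw [hzero, zero_add]
  have hdiag : ∀ i : Fin n, ∑ j : Fin n,
      (if i = j then (A - q) * (inner ℝ (h i) (h j) : ℝ) else 0)
        = (A - q) * ‖h i‖ ^ 2 := by
    intro i
    rw [Finset.sum_ite_eq (Finset.univ : Finset (Fin n)) i
      (fun j => (A - q) * (inner ℝ (h i) (h j) : ℝ)), if_pos (Finset.mem_univ i),
      real_inner_self_eq_norm_sq]
  simp_rw [hdiag]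
  rw [← Finset.mul_sum]
  congr 1
  have hAq : A - q = ((n - 2).choose (b - 1) : ℝ) := by
    have hm : n - 1 = (n - 2) + 1 := by omega
    have key : (n - 1).choose (b - 1)
        = (n - 2).choose (b - 1) + (if 2 ≤ b then (n - 2).choose (b - 2) else 0) := by
      rw [hm, svrg_choose_pascal_aux]
      by_cases h2 : 2 ≤ b
      · rw [if_pos h2, if_pos (show 1 ≤ b - 1 by omega),
          show b - 1 - 1 = b - 2 from by omega]
      · rw [if_neg h2, if_neg (show ¬ 1 ≤ b - 1 by omega)]
    rw [hA, hq]
    by_cases h2 : 2 ≤ b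
    · rw [if_pos h2] at key ⊢
      rw [key]; push_cast; ring
    · rw [if_neg h2] at key ⊢
      rw [key]; push_cast; ring
  rw [hAq]


variable [CompleteSpace F]

lemma svrg_inner_gradient_eq (φ : F → ℝ) (x v : F) :
    ⟪gradient φ x, v⟫ = fderiv ℝ φ x v := by
  rw [gradient, InnerProductSpace.toDual_symm_apply]


lemma svrg_descent_lemma (φ : F → ℝ) (hφ : Differentiable ℝ φ) (L : ℝ) (hL : 0 ≤ L)
    (hlip : ∀ x y, ‖gradient φ x - gradient φ y‖ ≤ L * ‖x - y‖) (x y : F) :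
    φ y ≤ φ x + ⟪gradient φ x, y - x⟫ + L / 2 * ‖y - x‖ ^ 2 := by
  set v := y - x with hv
  have hpath : ∀ t : ℝ, HasDerivAt (fun t : ℝ => φ (x + t • v))
      (⟪gradient φ (x + t • v), v⟫) t := by
    intro t
    have hp : HasDerivAt (fun t : ℝ => x + t • v) v t := by
      simpa using ((hasDerivAt_id t).smul_const v).const_add x
    have := (hφ (x + t • v)).hasFDerivAt.comp_hasDerivAt t hp
    rw [svrg_inner_gradient_eq]; exact this
  have hgradcont : Continuous (gradient φ) := by
    rcases le_iff_lt_or_eq.mp hL with hL' | hL'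
    · exact (LipschitzWith.of_dist_le_mul (K := ⟨L, hL⟩) (fun a b => by
        simp only [dist_eq_norm]; exact hlip a b)).continuous
    · have : ∀ a b : F, gradient φ a = gradient φ b := by
        intro a b
        have := hlip a b
        rw [← hL'] at this
        simpa [norm_le_zero_iff, sub_eq_zero] using this
      have e : gradient φ = fun _ => gradient φ 0 := funext fun a => this a 0
      rw [e]; exact continuous_const
  have hcont : Continuous fun t : ℝ => ⟪gradient φ (x + t • v), v⟫ := by
    apply Continuous.inner
    · exact hgradcont.comp (by continuity)
    · exact continuous_const
  have hftc : φ (x + (1:ℝ) • v) - φ (x + (0:ℝ) • v)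
      = ∫ t in (0:ℝ)..1, ⟪gradient φ (x + t • v), v⟫ := by
    refine (intervalIntegral.integral_eq_sub_of_hasDerivAt
      (fun t _ => hpath t) ?_).symm
    exact (hcont.intervalIntegrable 0 1)
  have hbound : ∫ t in (0:ℝ)..1, ⟪gradient φ (x + t • v), v⟫
      ≤ ⟪gradient φ x, v⟫ + L / 2 * ‖v‖ ^ 2 := by
    have hmono : ∫ t in (0:ℝ)..1, ⟪gradient φ (x + t • v), v⟫
        ≤ ∫ t in (0:ℝ)..1, (⟪gradient φ x, v⟫ + L * t * ‖v‖ ^ 2) := by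
      apply intervalIntegral.integral_mono_on (by norm_num)
        (hcont.intervalIntegrable 0 1)
        (((by fun_prop : Continuous fun t : ℝ => ⟪gradient φ x, v⟫ + L * t * ‖v‖ ^ 2)).intervalIntegrable 0 1)
      intro t ht
      rw [Set.mem_Icc] at ht
      have h1 : ⟪gradient φ (x + t • v), v⟫ - ⟪gradient φ x, v⟫
          = ⟪gradient φ (x + t • v) - gradient φ x, v⟫ := by
        rw [inner_sub_left]
      have h2 : ⟪gradient φ (x + t • v) - gradient φ x, v⟫
          ≤ ‖gradient φ (x + t • v) - gradient φ x‖ * ‖v‖ := real_inner_le_norm _ _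
      have h3 : ‖gradient φ (x + t • v) - gradient φ x‖ ≤ L * (t * ‖v‖) := by
        have := hlip (x + t • v) x
        simpa [norm_smul, abs_of_nonneg ht.1] using this
      have h2' : ⟪gradient φ (x + t • v) - gradient φ x, v⟫ ≤ L * (t * ‖v‖) * ‖v‖ :=
        h2.trans (mul_le_mul_of_nonneg_right h3 (norm_nonneg v))
      nlinarith [h1, h2']
    have hval : ∫ t in (0:ℝ)..1, (⟪gradient φ x, v⟫ + L * t * ‖v‖ ^ 2)
        = ⟪gradient φ x, v⟫ + L / 2 * ‖v‖ ^ 2 := by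
      rw [intervalIntegral.integral_add (intervalIntegrable_const)
        (((by fun_prop : Continuous fun t : ℝ => L * t * ‖v‖ ^ 2)).intervalIntegrable 0 1)]
      simp only [intervalIntegral.integral_const, smul_eq_mul]
      have : ∫ t in (0:ℝ)..1, L * t * ‖v‖ ^ 2 = L / 2 * ‖v‖ ^ 2 := by
        have : (fun t : ℝ => L * t * ‖v‖ ^ 2) = fun t : ℝ => (L * ‖v‖ ^ 2) * t := by
          funext t; ring
        rw [this, intervalIntegral.integral_const_mul, integral_id]
        ring
      rw [this]; ring
    linarith [hmono, hval.le]
  have := hftc ▸ hbound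
  simp only [one_smul, zero_smul, add_zero] at this
  have hy : x + v = y := by rw [hv]; abel
  rw [hy] at this
  linarith


lemma svrg_grad_sq_le (φ : F → ℝ) (hφ : Differentiable ℝ φ) (L : ℝ) (hL : 0 < L)
    (hlip : ∀ x y, ‖gradient φ x - gradient φ y‖ ≤ L * ‖x - y‖)
    (xs : F) (hmin : ∀ x, φ xs ≤ φ x) (x : F) :
    ‖gradient φ x‖ ^ 2 ≤ 2 * L * (φ x - φ xs) := by
  set g := gradient φ x with hg
  have hd := svrg_descent_lemma φ hφ L hL.le hlip x (x - L⁻¹ • g)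
  have h1 : x - L⁻¹ • g - x = -(L⁻¹ • g) := by abel
  rw [h1] at hd
  have h2 : ⟪g, -(L⁻¹ • g)⟫ = -(L⁻¹ * ‖g‖ ^ 2) := by
    rw [inner_neg_right, real_inner_smul_right, real_inner_self_eq_norm_sq]
  have h3 : ‖-(L⁻¹ • g)‖ ^ 2 = L⁻¹ ^ 2 * ‖g‖ ^ 2 := by
    rw [norm_neg, norm_smul]
    simp [abs_of_pos (inv_pos.mpr hL), mul_pow]
  rw [h2, h3] at hd
  have hm := hmin (x - L⁻¹ • g)
  have e1 : L / 2 * (L⁻¹ ^ 2 * ‖g‖ ^ 2) = L⁻¹ / 2 * ‖g‖ ^ 2 := by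
    field_simp
  rw [e1] at hd
  have h4 : L⁻¹ / 2 * ‖g‖ ^ 2 ≤ φ x - φ xs := by linarith
  have h5 := mul_le_mul_of_nonneg_left h4 (by positivity : (0:ℝ) ≤ 2 * L)
  have e2 : 2 * L * (L⁻¹ / 2 * ‖g‖ ^ 2) = ‖g‖ ^ 2 := by
    field_simp
  linarith


lemma svrg_choose_key (c m : ℕ) :
    (c + m).choose c * ((c + m + 2) * (c + m + 1))
      = (c + m + 2).choose (c + 1) * ((c + 1) * (m + 1)) := by
  have h1 : (c + m + 2) * (c + m + 1).choose c = (c + m + 2).choose (c + 1) * (c + 1) := by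
    simpa using Nat.add_one_mul_choose_eq (c + m + 1) c
  have h2 : (c + m + 1).choose (m + 1) = (c + m + 1).choose c := by
    have := Nat.choose_symm (show c ≤ c + m + 1 by omega)
    rwa [show c + m + 1 - c = m + 1 by omega] at this
  have h3 : (c + m + 1) * (c + m).choose m = (c + m + 1).choose (m + 1) * (m + 1) := by
    simpa using Nat.add_one_mul_choose_eq (c + m) m
  have h4 : (c + m).choose m = (c + m).choose c := by
    have := Nat.choose_symm (show c ≤ c + m by omega)
    rwa [show c + m - c = m by omega] at this
  calc (c + m).choose c * ((c + m + 2) * (c + m + 1))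
      = (c + m + 2) * ((c + m + 1) * (c + m).choose m) := by rw [h4]; ring
    _ = (c + m + 2) * ((c + m + 1).choose (m + 1) * (m + 1)) := by rw [h3]
    _ = ((c + m + 2) * (c + m + 1).choose c) * (m + 1) := by rw [h2]; ring
    _ = (c + m + 2).choose (c + 1) * ((c + 1) * (m + 1)) := by rw [h1]; ring


lemma svrg_coeff_identity (n b : ℕ) (hn : 2 ≤ n) (hb : 1 ≤ b) (hbn : b ≤ n) :
    ((n - 2).choose (b - 1) : ℝ) * (n * (n - 1 : ℕ))
      = (n.choose b : ℝ) * (b * (n - b : ℕ)) := by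
  rcases eq_or_lt_of_le hbn with rfl | hlt
  · rw [Nat.choose_eq_zero_of_lt (by omega), Nat.sub_self]
    simp
  · obtain ⟨c, rfl⟩ : ∃ c, b = c + 1 := ⟨b - 1, by omega⟩
    obtain ⟨m, rfl⟩ : ∃ m, n = c + m + 2 := ⟨n - c - 2, by omega⟩
    have e1 : c + m + 2 - 2 = c + m := by omega
    have e2 : c + 1 - 1 = c := by omega
    have e3 : c + m + 2 - 1 = c + m + 1 := by omega
    have e4 : c + m + 2 - (c + 1) = m + 1 := by omega
    rw [e1, e2, e3, e4]
    have h := congrArg (Nat.cast : ℕ → ℝ) (svrg_choose_key c m)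
    push_cast at h ⊢
    linarith [h]


end Aux

set_option maxHeartbeats 2000000 in
/-- Mini-batch SVRG variance bound under interpolation:
E_{I_k} ‖∇f_{I_k}(x_{k+1}) - ∇f_{I_k}(x̃) + ∇f(x̃) - ∇f(x_{k+1})‖²
  ≤ 4L ((n-b_k)/(b_k(n-1))) (f(x_{k+1}) - f(x*) + f(x̃) - f(x*)). -/
theorem svrg_variance_bound_minibatch {d n : ℕ} (hn : 2 ≤ n)
    (bk : ℕ) (hb1 : 1 ≤ bk) (hbn : bk ≤ n)
    (fi : Fin n → EuclideanSpace ℝ (Fin d) → ℝ)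
    (f : EuclideanSpace ℝ (Fin d) → ℝ)
    (hf : f = fun x => (1 / (n : ℝ)) * ∑ i, fi i x)
    (hdiff : ∀ i, Differentiable ℝ (fi i))
    (L : ℝ) (hL : 0 < L)
    (hsmooth : ∀ i, ∀ x y, ‖gradient (fi i) x - gradient (fi i) y‖ ≤ L * ‖x - y‖)
    (xstar : EuclideanSpace ℝ (Fin d))
    (hminf : ∀ x, f xstar ≤ f x)
    (hinterp : ∀ i, ∀ x, fi i xstar ≤ fi i x)
    (xk1 xtilde : EuclideanSpace ℝ (Fin d)) :
    (1 / (n.choose bk : ℝ)) *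
        ∑ I ∈ (Finset.univ : Finset (Fin n)).powersetCard bk,
          ‖(1 / (bk : ℝ)) • (∑ i ∈ I, gradient (fi i) xk1)
            - (1 / (bk : ℝ)) • (∑ i ∈ I, gradient (fi i) xtilde)
            + gradient f xtilde - gradient f xk1‖ ^ 2
      ≤ 4 * L * (((n : ℝ) - bk) / (bk * ((n : ℝ) - 1))) *
          (f xk1 - f xstar + (f xtilde - f xstar)) := by
  classical
  have hn0 : ((n : ℝ)) ≠ 0 := by positivity
  have hb0 : ((bk : ℝ)) ≠ 0 := by positivity
  -- gradient linearity
  have hgrad_linear : ∀ x : EuclideanSpace ℝ (Fin d),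
      gradient f x = (1 / (n : ℝ)) • ∑ i, gradient (fi i) x := by
    intro x
    have hdsum : DifferentiableAt ℝ (fun y : EuclideanSpace ℝ (Fin d) => ∑ i, fi i y) x :=
      DifferentiableAt.fun_sum (fun i _ => (hdiff i) x)
    have hfd : fderiv ℝ f x = (1 / (n : ℝ)) • ∑ i, fderiv ℝ (fi i) x := by
      rw [hf, fderiv_const_mul hdsum, fderiv_fun_sum (fun i _ => (hdiff i) x)]
    unfold gradient
    rw [hfd, map_smul, map_sum]
  set g : Fin n → EuclideanSpace ℝ (Fin d) := fun i => gradient (fi i) xk1 - gradient (fi i) xtilde with hg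
  set gbar : EuclideanSpace ℝ (Fin d) := (1 / (n : ℝ)) • ∑ i, g i with hgbar
  set h : Fin n → EuclideanSpace ℝ (Fin d) := fun i => g i - gbar with hh
  have hsumg : ∑ i, g i = (n : ℝ) • gbar := by
    rw [hgbar, smul_smul]
    rw [show (n : ℝ) * (1 / (n : ℝ)) = 1 by field_simp]
    rw [one_smul]
  have hsum0 : ∑ i, h i = 0 := by
    rw [hh]
    simp only
    rw [Finset.sum_sub_distrib, Finset.sum_const, Finset.card_univ, Fintype.card_fin,
      sub_eq_zero, hsumg, ← Nat.cast_smul_eq_nsmul ℝ]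
  -- rewrite the summand
  have hrw : ∀ I ∈ (Finset.univ : Finset (Fin n)).powersetCard bk,
      ‖(1 / (bk : ℝ)) • (∑ i ∈ I, gradient (fi i) xk1)
        - (1 / (bk : ℝ)) • (∑ i ∈ I, gradient (fi i) xtilde)
        + gradient f xtilde - gradient f xk1‖ ^ 2
      = (1 / (bk : ℝ)) ^ 2 * ‖∑ i ∈ I, h i‖ ^ 2 := by
    intro I hI
    have hIcard : I.card = bk := (Finset.mem_powersetCard.mp hI).2
    have e1 : (1 / (bk : ℝ)) • (∑ i ∈ I, gradient (fi i) xk1)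
        - (1 / (bk : ℝ)) • (∑ i ∈ I, gradient (fi i) xtilde)
        = (1 / (bk : ℝ)) • ∑ i ∈ I, g i := by
      rw [← smul_sub, ← Finset.sum_sub_distrib]
    have e2 : gradient f xtilde - gradient f xk1 = -gbar := by
      rw [hgrad_linear, hgrad_linear, ← smul_sub, ← Finset.sum_sub_distrib, hgbar,
        ← smul_neg, ← Finset.sum_neg_distrib]
      congr 1
      exact Finset.sum_congr rfl fun i _ => by rw [hg]; simp only; abel
    have e3 : ∑ i ∈ I, h i = (∑ i ∈ I, g i) - (bk : ℝ) • gbar := by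
      rw [hh]
      simp only
      rw [Finset.sum_sub_distrib, Finset.sum_const, hIcard, ← Nat.cast_smul_eq_nsmul ℝ]
    have hvec : (1 / (bk : ℝ)) • (∑ i ∈ I, gradient (fi i) xk1)
        - (1 / (bk : ℝ)) • (∑ i ∈ I, gradient (fi i) xtilde)
        + gradient f xtilde - gradient f xk1
        = (1 / (bk : ℝ)) • ∑ i ∈ I, h i := by
      rw [e3, smul_sub, smul_smul, show (1 / (bk : ℝ)) * (bk : ℝ) = 1 by field_simp,
        one_smul, e1, sub_eq_add_neg ((1 / (bk : ℝ)) • ∑ i ∈ I, g i) gbar, ← e2]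
      abel
    rw [hvec, norm_smul, mul_pow, Real.norm_eq_abs,
      abs_of_nonneg (by positivity : (0:ℝ) ≤ 1 / (bk : ℝ))]
  have hsum_eq : ∑ I ∈ (Finset.univ : Finset (Fin n)).powersetCard bk,
      ‖(1 / (bk : ℝ)) • (∑ i ∈ I, gradient (fi i) xk1)
        - (1 / (bk : ℝ)) • (∑ i ∈ I, gradient (fi i) xtilde)
        + gradient f xtilde - gradient f xk1‖ ^ 2
      = (1 / (bk : ℝ)) ^ 2 * (((n - 2).choose (bk - 1) : ℝ) * ∑ i, ‖h i‖ ^ 2) := by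
    rw [Finset.sum_congr rfl hrw, ← Finset.mul_sum,
      svrg_sum_powersetCard_norm_sq n bk hn hb1 hbn h hsum0]
  -- bound sum of centered norms by uncentered
  have hSh : ∑ i, ‖h i‖ ^ 2 ≤ ∑ i, ‖g i‖ ^ 2 := by
    have expand : ∀ i : Fin n, ‖h i‖ ^ 2
        = ‖g i‖ ^ 2 - 2 * ⟪g i, gbar⟫ + ‖gbar‖ ^ 2 := by
      intro i
      rw [hh]
      simp only
      exact norm_sub_sq_real _ _
    have hN1 : (0:ℝ) ≤ (n : ℝ) := by positivity
    calc ∑ i, ‖h i‖ ^ 2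
        = ∑ i : Fin n, (‖g i‖ ^ 2 - 2 * ⟪g i, gbar⟫ + ‖gbar‖ ^ 2) :=
          Finset.sum_congr rfl fun i _ => expand i
      _ = (∑ i, ‖g i‖ ^ 2) - 2 * ⟪∑ i, g i, gbar⟫ + (n : ℝ) * ‖gbar‖ ^ 2 := by
          rw [Finset.sum_add_distrib, Finset.sum_sub_distrib, Finset.sum_const,
            Finset.card_univ, Fintype.card_fin, nsmul_eq_mul, ← Finset.mul_sum, ← sum_inner]
      _ ≤ ∑ i, ‖g i‖ ^ 2 := by
          rw [hsumg, real_inner_smul_left, real_inner_self_eq_norm_sq]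
          nlinarith [mul_nonneg hN1 (sq_nonneg ‖gbar‖)]
  -- bound each uncentered norm
  have hgi : ∀ i : Fin n, ‖g i‖ ^ 2
      ≤ 4 * L * ((fi i xk1 - fi i xstar) + (fi i xtilde - fi i xstar)) := by
    intro i
    have h1 := svrg_grad_sq_le (fi i) (hdiff i) L hL (hsmooth i) xstar (hinterp i) xk1
    have h2 := svrg_grad_sq_le (fi i) (hdiff i) L hL (hsmooth i) xstar (hinterp i) xtilde
    have h3 : ‖g i‖ ≤ ‖gradient (fi i) xk1‖ + ‖gradient (fi i) xtilde‖ := by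
      rw [hg]; exact norm_sub_le _ _
    nlinarith [norm_nonneg (gradient (fi i) xk1), norm_nonneg (gradient (fi i) xtilde),
      norm_nonneg (g i), sq_nonneg (‖gradient (fi i) xk1‖ - ‖gradient (fi i) xtilde‖)]
  have hSg : ∑ i, ‖g i‖ ^ 2
      ≤ 4 * L * (n : ℝ) * (f xk1 - f xstar + (f xtilde - f xstar)) := by
    calc ∑ i, ‖g i‖ ^ 2
        ≤ ∑ i : Fin n, 4 * L * ((fi i xk1 - fi i xstar) + (fi i xtilde - fi i xstar)) :=
          Finset.sum_le_sum fun i _ => hgi i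
      _ = 4 * L * (((∑ i, fi i xk1) - ∑ i, fi i xstar)
            + ((∑ i, fi i xtilde) - ∑ i, fi i xstar)) := by
          rw [← Finset.mul_sum, Finset.sum_add_distrib, Finset.sum_sub_distrib,
            Finset.sum_sub_distrib]
      _ = 4 * L * (n : ℝ) * (f xk1 - f xstar + (f xtilde - f xstar)) := by
          rw [hf]
          simp only
          field_simp
  -- assemble
  have hC : (0:ℝ) < (n.choose bk : ℝ) := by exact_mod_cast Nat.choose_pos hbn
  have hK : (0:ℝ) ≤ ((n - 2).choose (bk - 1) : ℝ) := by positivity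
  have hcoeff_nonneg : (0:ℝ) ≤ (1 / (n.choose bk : ℝ)) * ((1 / (bk : ℝ)) ^ 2
      * ((n - 2).choose (bk - 1) : ℝ)) := by positivity
  have hco : ((n - 2).choose (bk - 1) : ℝ) * ((n : ℝ) * ((n : ℝ) - 1))
      = (n.choose bk : ℝ) * ((bk : ℝ) * ((n : ℝ) - (bk : ℝ))) := by
    have := svrg_coeff_identity n bk hn hb1 hbn
    push_cast [Nat.cast_sub hbn, Nat.cast_sub (show 1 ≤ n by omega)] at this
    linarith [this]
  have hShg : ∑ i, ‖h i‖ ^ 2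
      ≤ 4 * L * (n : ℝ) * (f xk1 - f xstar + (f xtilde - f xstar)) := hSh.trans hSg
  rw [hsum_eq]
  have hmain : (1 / (n.choose bk : ℝ)) * ((1 / (bk : ℝ)) ^ 2
        * (((n - 2).choose (bk - 1) : ℝ) * ∑ i, ‖h i‖ ^ 2))
      ≤ (1 / (n.choose bk : ℝ)) * ((1 / (bk : ℝ)) ^ 2
        * (((n - 2).choose (bk - 1) : ℝ)
          * (4 * L * (n : ℝ) * (f xk1 - f xstar + (f xtilde - f xstar))))) := by
    have := mul_le_mul_of_nonneg_left hShg hcoeff_nonneg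
    calc (1 / (n.choose bk : ℝ)) * ((1 / (bk : ℝ)) ^ 2
          * (((n - 2).choose (bk - 1) : ℝ) * ∑ i, ‖h i‖ ^ 2))
        = (1 / (n.choose bk : ℝ)) * ((1 / (bk : ℝ)) ^ 2
          * ((n - 2).choose (bk - 1) : ℝ)) * ∑ i, ‖h i‖ ^ 2 := by ring
      _ ≤ (1 / (n.choose bk : ℝ)) * ((1 / (bk : ℝ)) ^ 2
          * ((n - 2).choose (bk - 1) : ℝ))
            * (4 * L * (n : ℝ) * (f xk1 - f xstar + (f xtilde - f xstar))) := this
      _ = _ := by ring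
  refine hmain.trans (le_of_eq ?_)
  have hB1 : ((n : ℝ) - 1) ≠ 0 := by
    have : (2:ℝ) ≤ (n : ℝ) := by exact_mod_cast hn
    intro hcontra
    nlinarith
  rw [show ((n : ℝ) - bk) / (bk * ((n : ℝ) - 1))
      = ((n - 2).choose (bk - 1) : ℝ) * n / ((n.choose bk : ℝ) * (bk : ℝ) ^ 2) from by
    rw [div_eq_div_iff (mul_ne_zero hb0 hB1) (mul_ne_zero hC.ne' (pow_ne_zero 2 hb0))]
    linear_combination (-(bk : ℝ)) * hco]
  ring
end
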